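/- Let Y, Λ be compact metric spaces, X a compact metric space, and L(y, λ, Q) = E_Q[l(y, λ, x)] for a continuous function l. Define the saddle-point correspondences h^y(Q) = argmin_{y ∈ Y} max_{λ ∈ Λ} L(y, λ, Q) and h^λ(Q) = argmax_{λ ∈ Λ} min_{y ∈ Y} L(y, λ, Q). Then the graph Gr = {(u, v, Q) : u ∈ h^y(Q), v ∈ h^λ(Q)} is closed in Y × Λ × P(X), where P(X) carries the weak topology. -/

import Mathlib

/-!
Both defining conditions are inequalities between continuous functions of `(y, λ, Q)`, so the
graph is an intersection of closed sets. `L` is jointly continuous because currying `l` gives a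
continuous map `Y × Λ → C(X, ℝ)` into the sup-norm topology (`X` is compact), and `∫ f dQ` is
1-Lipschitz in `f` and weakly continuous in `Q`. Taking a max or min over a compact factor
preserves continuity (tube lemma).
-/

open MeasureTheory BoundedContinuousFunction

section CompactParameter

variable {α β γ : Type*} [ConditionallyCompleteLinearOrder α] [TopologicalSpace α]
  [OrderTopology α] [TopologicalSpace β] [CompactSpace β] [TopologicalSpace γ]

theorem continuous_iSup_of_compactSpace {f : γ → β → α} (hf : Continuous ↿f) :
    Continuous fun x => ⨆ b, f x b := by
  simpa only [Set.image_univ, sSup_range] using isCompact_univ.continuous_sSup hf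

theorem continuous_iInf_of_compactSpace {f : γ → β → α} (hf : Continuous ↿f) :
    Continuous fun x => ⨅ b, f x b :=
  continuous_iSup_of_compactSpace (α := αᵒᵈ) hf

end CompactParameter

section WeakConvergence

variable {X : Type*} [TopologicalSpace X] [MeasurableSpace X] [OpensMeasurableSpace X]

theorem BoundedContinuousFunction.lipschitzWith_integral (μ : Measure X)
    [IsProbabilityMeasure μ] :
    LipschitzWith 1 fun f : X →ᵇ ℝ => ∫ x, f x ∂μ := by
  refine LipschitzWith.of_dist_le_mul fun f g => ?_
  rw [NNReal.coe_one, one_mul, dist_eq_norm, dist_eq_norm,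
    ← integral_sub (f.integrable μ) (g.integrable μ)]
  exact (f - g).norm_integral_le_norm μ

theorem continuous_integral_boundedContinuousFunction_prod :
    Continuous fun p : (X →ᵇ ℝ) × ProbabilityMeasure X => ∫ x, p.1 x ∂(p.2 : Measure X) :=
  continuous_prod_of_continuous_lipschitzWith _ 1
    ProbabilityMeasure.continuous_integral_boundedContinuousFunction
    fun μ => BoundedContinuousFunction.lipschitzWith_integral (μ : Measure X)

theorem continuous_integral_of_continuous_uncurry [CompactSpace X] {A : Type*}
    [TopologicalSpace A] {F : A → X → ℝ} (hF : Continuous ↿F) :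
    Continuous fun p : A × ProbabilityMeasure X => ∫ x, F p.1 x ∂(p.2 : Measure X) := by
  let G : A → X →ᵇ ℝ := fun a =>
    ContinuousMap.isometryEquivBoundedOfCompact X ℝ (ContinuousMap.curry ⟨_, hF⟩ a)
  have hG : Continuous G :=
    (ContinuousMap.isometryEquivBoundedOfCompact X ℝ).continuous.comp
      (ContinuousMap.curry ⟨_, hF⟩).continuous
  exact continuous_integral_boundedContinuousFunction_prod.comp (hG.prodMap continuous_id)

end WeakConvergence

theorem stmt2_general {X Y Λ : Type*}
    [MetricSpace X] [CompactSpace X] [MeasurableSpace X] [BorelSpace X]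
    [MetricSpace Y] [CompactSpace Y]
    [MetricSpace Λ] [CompactSpace Λ]
    (l : Y → Λ → X → ℝ)
    (hl : Continuous fun p : Y × Λ × X => l p.1 p.2.1 p.2.2) :
    IsClosed {p : Y × Λ × ProbabilityMeasure X |
      (∀ y : Y,
        (⨆ lam : Λ, ∫ x, l p.1 lam x ∂(p.2.2 : Measure X))
          ≤ ⨆ lam : Λ, ∫ x, l y lam x ∂(p.2.2 : Measure X)) ∧
      (∀ lam : Λ,
        (⨅ y : Y, ∫ x, l y lam x ∂(p.2.2 : Measure X))
          ≤ ⨅ y : Y, ∫ x, l y p.2.1 x ∂(p.2.2 : Measure X))} := by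
  have hL : Continuous fun p : (Y × Λ) × ProbabilityMeasure X =>
      ∫ x, l p.1.1 p.1.2 x ∂(p.2 : Measure X) :=
    continuous_integral_of_continuous_uncurry (F := fun q : Y × Λ => l q.1 q.2)
      (hl.comp (show Continuous fun p : (Y × Λ) × X => (p.1.1, p.1.2, p.2) by fun_prop))
  have hmax : Continuous fun a : Y × ProbabilityMeasure X =>
      ⨆ lam : Λ, ∫ x, l a.1 lam x ∂(a.2 : Measure X) :=
    continuous_iSup_of_compactSpace <| hL.comp
      (show Continuous fun p : (Y × ProbabilityMeasure X) × Λ => ((p.1.1, p.2), p.1.2) by fun_prop)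
  have hmin : Continuous fun a : Λ × ProbabilityMeasure X =>
      ⨅ y : Y, ∫ x, l y a.1 x ∂(a.2 : Measure X) :=
    continuous_iInf_of_compactSpace <| hL.comp
      (show Continuous fun p : (Λ × ProbabilityMeasure X) × Y => ((p.2, p.1.1), p.1.2) by fun_prop)
  simp only [Set.ofPred_and, Set.ofPred_forall]
  exact .inter
    (isClosed_iInter fun y => isClosed_le
      (hmax.comp (continuous_fst.prodMk continuous_snd.snd))
      (hmax.comp (continuous_const.prodMk continuous_snd.snd)))
    (isClosed_iInter fun lam => isClosed_le
      (hmin.comp (continuous_const.prodMk continuous_snd.snd))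
      (hmin.comp (continuous_snd.fst.prodMk continuous_snd.snd)))

/-- Closedness of the graph of the saddle-point correspondences
`h^y(Q) = argmin_y max_λ E_Q[l(y,λ,x)]` and `h^λ(Q) = argmax_λ min_y E_Q[l(y,λ,x)]`
in `Y × Λ × P(X)` with the weak topology on probability measures. -/
theorem stmt2 {X Y Λ : Type*}
    [MetricSpace X] [CompactSpace X] [MeasurableSpace X] [BorelSpace X]
    [MetricSpace Y] [CompactSpace Y] [Nonempty Y]
    [MetricSpace Λ] [CompactSpace Λ] [Nonempty Λ]
    (l : Y → Λ → X → ℝ)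
    (hl : Continuous fun p : Y × Λ × X => l p.1 p.2.1 p.2.2) :
    IsClosed {p : Y × Λ × ProbabilityMeasure X |
      (∀ y : Y,
        (⨆ lam : Λ, ∫ x, l p.1 lam x ∂(p.2.2 : Measure X))
          ≤ ⨆ lam : Λ, ∫ x, l y lam x ∂(p.2.2 : Measure X)) ∧
      (∀ lam : Λ,
        (⨅ y : Y, ∫ x, l y lam x ∂(p.2.2 : Measure X))
          ≤ ⨅ y : Y, ∫ x, l y p.2.1 x ∂(p.2.2 : Measure X))} :=
  stmt2_general l hl
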